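/- The function h defined by h(x) = ∑_{m=−∞}^{∞} 2^{2x−2m} exp(−2^{x−m}) converges for every real x, satisfies h(x+1) = h(x) for every real x, and is bounded: there is a constant M such that h(x) ≤ M for all real x. -/

import Mathlib

/-
With `u = 2 ^ t` put `hTerm t = u ^ 2 * exp (-u)`; the summand of `h x` is `hTerm (x - m)`, so `h` is
the periodization of `hTerm` over `ℤ`, hence 1-periodic. Since `u ^ 3 / 3! ≤ exp u`, we get
`hTerm t ≤ 6 * 2 ^ (-|t|)`, and as `|m - ⌊x⌋| ≤ |x - m| + 1` the translates `2 ^ (-|x - m|)` are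
dominated by `2 * 2 ^ (-|m - ⌊x⌋|)`, whose sum over `m` does not depend on `x`.
-/

open Real

/-- `h(x) = ∑_{m=-∞}^{∞} 2^{2x-2m} exp(-2^{x-m})`, summed over all `m : ℤ`. -/
noncomputable def h (x : ℝ) : ℝ :=
  ∑' m : ℤ, (2 : ℝ) ^ (2 * x - 2 * (m : ℝ)) * Real.exp (-(2 : ℝ) ^ (x - (m : ℝ)))

section Periodization

theorem periodic_tsum_comp_sub_intCast {α : Type*} [AddCommMonoid α] [TopologicalSpace α]
    (f : ℝ → α) : Function.Periodic (fun x => ∑' m : ℤ, f (x - m)) 1 := fun x => by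
  simpa [add_sub_add_right_eq_sub] using
    ((Equiv.addRight (1 : ℤ)).tsum_eq fun m : ℤ => f (x + 1 - m)).symm

theorem summable_two_rpow_neg_abs_intCast : Summable fun n : ℤ => (2 : ℝ) ^ (-|(n : ℝ)|) := by
  have hgeom : Summable fun n : ℕ => (2 : ℝ) ^ (-|(n : ℝ)|) := by
    simpa [Real.rpow_neg, Real.rpow_natCast] using summable_geometric_two
  exact .of_nat_of_neg (by simpa using hgeom) (by simpa using hgeom)

theorem two_rpow_neg_abs_sub_le (x : ℝ) (m : ℤ) :
    (2 : ℝ) ^ (-|x - m|) ≤ 2 * 2 ^ (-|((m - ⌊x⌋ : ℤ) : ℝ)|) := by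
  have hfloor : |((m - ⌊x⌋ : ℤ) : ℝ)| ≤ |x - m| + 1 := by
    have hfract : |x - ⌊x⌋| ≤ 1 := by
      rw [Int.self_sub_floor, Int.abs_fract]; exact (Int.fract_lt_one x).le
    push_cast
    linarith [abs_sub_le (m : ℝ) x ⌊x⌋, abs_sub_comm (m : ℝ) x]
  calc (2 : ℝ) ^ (-|x - m|) ≤ 2 ^ (1 + -|((m - ⌊x⌋ : ℤ) : ℝ)|) :=
        Real.rpow_le_rpow_of_exponent_le one_le_two (by linarith)
    _ = 2 * 2 ^ (-|((m - ⌊x⌋ : ℤ) : ℝ)|) := by rw [Real.rpow_add two_pos, Real.rpow_one]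

variable {f : ℝ → ℝ} {C : ℝ}

theorem comp_sub_intCast_le (hf0 : ∀ t, 0 ≤ f t) (hf : ∀ t, f t ≤ C * 2 ^ (-|t|))
    (x : ℝ) (m : ℤ) : f (x - m) ≤ 2 * C * 2 ^ (-|((m - ⌊x⌋ : ℤ) : ℝ)|) := by
  have hC : 0 ≤ C := by simpa using (hf0 0).trans (hf 0)
  calc f (x - m) ≤ C * 2 ^ (-|x - m|) := hf _
    _ ≤ C * (2 * 2 ^ (-|((m - ⌊x⌋ : ℤ) : ℝ)|)) :=
        mul_le_mul_of_nonneg_left (two_rpow_neg_abs_sub_le x m) hC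
    _ = 2 * C * 2 ^ (-|((m - ⌊x⌋ : ℤ) : ℝ)|) := by ring

theorem summable_two_rpow_neg_abs_sub_intCast (k : ℤ) :
    Summable fun m : ℤ => (2 : ℝ) ^ (-|((m - k : ℤ) : ℝ)|) :=
  (Equiv.subRight k).summable_iff.mpr summable_two_rpow_neg_abs_intCast

theorem summable_comp_sub_intCast (hf0 : ∀ t, 0 ≤ f t) (hf : ∀ t, f t ≤ C * 2 ^ (-|t|))
    (x : ℝ) : Summable fun m : ℤ => f (x - m) :=
  .of_nonneg_of_le (fun _ => hf0 _) (comp_sub_intCast_le hf0 hf x)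
    ((summable_two_rpow_neg_abs_sub_intCast ⌊x⌋).mul_left (2 * C))

theorem tsum_comp_sub_intCast_le (hf0 : ∀ t, 0 ≤ f t) (hf : ∀ t, f t ≤ C * 2 ^ (-|t|))
    (x : ℝ) : ∑' m : ℤ, f (x - m) ≤ 2 * C * ∑' n : ℤ, (2 : ℝ) ^ (-|(n : ℝ)|) :=
  calc ∑' m : ℤ, f (x - m) ≤ ∑' m : ℤ, 2 * C * (2 : ℝ) ^ (-|((m - ⌊x⌋ : ℤ) : ℝ)|) :=
        Summable.tsum_le_tsum (comp_sub_intCast_le hf0 hf x) (summable_comp_sub_intCast hf0 hf x)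
          ((summable_two_rpow_neg_abs_sub_intCast ⌊x⌋).mul_left (2 * C))
    _ = 2 * C * ∑' n : ℤ, (2 : ℝ) ^ (-|(n : ℝ)|) := by
        rw [tsum_mul_left]
        congr 1
        exact (Equiv.subRight ⌊x⌋).tsum_eq fun n : ℤ => (2 : ℝ) ^ (-|(n : ℝ)|)

end Periodization

theorem pow_three_mul_exp_neg_le_six {u : ℝ} (hu : 0 ≤ u) : u ^ 3 * exp (-u) ≤ 6 := by
  have h := pow_div_factorial_le_exp u hu 3
  rw [exp_neg, ← div_eq_mul_inv, div_le_iff₀ (exp_pos u)]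
  norm_num [Nat.factorial] at h
  linarith

noncomputable def hTerm (t : ℝ) : ℝ := 2 ^ (2 * t) * exp (-2 ^ t)

theorem hTerm_nonneg (t : ℝ) : 0 ≤ hTerm t := by
  unfold hTerm; positivity

theorem hTerm_le (t : ℝ) : hTerm t ≤ 6 * 2 ^ (-|t|) := by
  set u : ℝ := 2 ^ t with hu
  have hu0 : 0 < u := by positivity
  have hsq : (2 : ℝ) ^ (2 * t) = u ^ 2 := by
    rw [mul_comm, Real.rpow_mul zero_le_two, hu, Real.rpow_two]
  rw [hTerm, hsq, ← hu]
  rcases le_or_gt 0 t with ht | ht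
  · rw [abs_of_nonneg ht, Real.rpow_neg zero_le_two, ← hu]
    calc u ^ 2 * exp (-u) = u ^ 3 * exp (-u) * u⁻¹ := by field_simp
      _ ≤ 6 * u⁻¹ := by gcongr; exact pow_three_mul_exp_neg_le_six hu0.le
  · have hu1 : u ≤ 1 := Real.rpow_le_one_of_one_le_of_nonpos one_le_two ht.le
    rw [abs_of_neg ht, neg_neg, ← hu]
    calc u ^ 2 * exp (-u) ≤ u ^ 2 :=
          mul_le_of_le_one_right (by positivity) (exp_le_one_iff.mpr (by linarith))
      _ ≤ 6 * u := by nlinarith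

theorem hTerm_sub (x : ℝ) (m : ℤ) :
    hTerm (x - m) = (2 : ℝ) ^ (2 * x - 2 * (m : ℝ)) * exp (-(2 : ℝ) ^ (x - (m : ℝ))) := by
  rw [hTerm, mul_sub]

theorem h_summable_periodic_bounded :
    (∀ x : ℝ, Summable fun m : ℤ =>
        (2 : ℝ) ^ (2 * x - 2 * (m : ℝ)) * Real.exp (-(2 : ℝ) ^ (x - (m : ℝ)))) ∧
    (∀ x : ℝ, h (x + 1) = h x) ∧
    ∃ M : ℝ, ∀ x : ℝ, h x ≤ M := by
  have h_eq (x : ℝ) : h x = ∑' m : ℤ, hTerm (x - m) := by simp only [h, hTerm_sub]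
  refine ⟨fun x => ?_, fun x => ?_, ⟨2 * 6 * ∑' n : ℤ, (2 : ℝ) ^ (-|(n : ℝ)|), fun x => ?_⟩⟩
  · simpa only [hTerm_sub] using summable_comp_sub_intCast hTerm_nonneg hTerm_le x
  · simpa only [h_eq] using periodic_tsum_comp_sub_intCast hTerm x
  · simpa only [h_eq] using tsum_comp_sub_intCast_le hTerm_nonneg hTerm_le x
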